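/- Let k ≥ 1 and D ≥ 0, let T̃ be the complete k-ary tree of depth D with root λ, with parameters h_u ∈ [0,1] on the nodes and h_u = 0 for every node at depth D. Define φ recursively on the nodes of T̃ by φ(u) := 1 if u is at depth D, and φ(u) := max{1 − h_u, h_u · ∏_{i=0}^{k−1} φ(u_{child,i})} otherwise, where u_{child,0}, …, u_{child,k−1} are the children of u in T̃. Then max over all full subtrees T of T̃ of the weight ∏_{u ∈ L^T}(1 − h_u) · ∏_{u' ∈ I^T} h_{u'} equals φ(λ). In particular, with h_u taken to be the sequentially updated hyperparameters g_{u|t} of the quadtree mixture algorithm (k = 4), the maximum a posteriori model probability max_{m} p(m | v^t) equals φ_t(s_λ). -/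

import Mathlib

/-!
A full subtree is either the single leaf `u`, of weight `1 - h u`, or an inner node `u` whose
weight is `h u` times the weights of `k` independently chosen full subtrees below its children.
All weights are nonnegative, so the maximum of such a product is the product of the maxima, and
the maximal weight obeys the recursion defining `φ`. The same factorisation, with `h = 0` at the
bottom level, shows that the weights of all full subtrees sum to `1`.

For the quadtree, the update of `g` along the path of pixel `t` is built so that
`w_{g_{·|t}}(m) · q(v_t | root) = w_{g_{·|t-1}}(m) · q̃(v_t | s_m(t))`. Telescoping over `t` gives
`p(m) p(v^t | m) = w_{g_{·|t}}(m) · ∏ q(v_i | root)`, so the posterior of `m` is exactly its weight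
under the updated parameters, and the first part applies.
-/

inductive FullTree (k : ℕ) : ℕ → Type where
  | leaf {D : ℕ} : FullTree k D
  | node {D : ℕ} (c : Fin k → FullTree k D) : FullTree k (D + 1)

namespace FullTree

def equivZero (k : ℕ) : FullTree k 0 ≃ Unit where
  toFun _ := ()
  invFun _ := .leaf
  left_inv t := by cases t; rfl
  right_inv _ := rfl

def equivSucc (k D : ℕ) : FullTree k (D + 1) ≃ Option (Fin k → FullTree k D) where
  toFun t := match t with
    | .leaf => none
    | .node c => some c
  invFun o := match o with
    | none => .leaf
    | some c => .node c
  left_inv t := by cases t <;> rfl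
  right_inv o := by cases o <;> rfl

instance instFintype (k : ℕ) : (D : ℕ) → Fintype (FullTree k D)
  | 0 => Fintype.ofEquiv Unit (equivZero k).symm
  | (D + 1) => letI := instFintype k D; Fintype.ofEquiv _ (equivSucc k D).symm

noncomputable instance (k D : ℕ) : DecidableEq (FullTree k D) := Classical.decEq _

/-- The set of (paths to) leaf nodes of a full subtree whose root has path `u`. -/
def leaves {k : ℕ} : {D : ℕ} → List (Fin k) → FullTree k D → Finset (List (Fin k))
  | _, u, .leaf => {u}
  | _, u, .node c => Finset.univ.biUnion fun i => leaves (u ++ [i]) (c i)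

/-- The set of (paths to) inner nodes of a full subtree whose root has path `u`. -/
def inners {k : ℕ} : {D : ℕ} → List (Fin k) → FullTree k D → Finset (List (Fin k))
  | _, _, .leaf => ∅
  | _, u, .node c => insert u (Finset.univ.biUnion fun i => inners (u ++ [i]) (c i))

/-- The weight ∏_{u ∈ L^T} (1 - g u) * ∏_{u ∈ I^T} g u of a full subtree rooted at path `u`. -/
noncomputable def weight {k D : ℕ} (g : List (Fin k) → ℝ) (u : List (Fin k))
    (T : FullTree k D) : ℝ :=
  (∏ s ∈ leaves u T, (1 - g s)) * ∏ s ∈ inners u T, g s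

end FullTree

namespace FullTree

/-- Follow the path `p` down the full subtree `T` (whose root has path `u`) until a leaf of
`T` is reached; returns the path of that leaf.  For a pixel `p` (a path of full length
`dmax`), `leafOf [] m p` is the unique leaf block `s_m` of `m` containing the pixel `p`. -/
def leafOf {k : ℕ} : {D : ℕ} → List (Fin k) → FullTree k D → List (Fin k) → List (Fin k)
  | _, u, .leaf, _ => u
  | _, u, .node _, [] => u
  | _, u, .node c, i :: p => leafOf (u ++ [i]) (c i) p

end FullTree

/-- The likelihood `p(v^{t-1} | m) = ∏_{i < t} q̃(v_i | v^{i-1}, s_m(i))` of the first `t`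
pixel values under model `m`, where `qt i s x = q̃(x | v^{i-1}, s)` is the per-block
predictive pmf and `s_m(i)` the unique leaf of `m` containing pixel `i`. -/
noncomputable def like (dmax : ℕ) {V : Type} (qt : ℕ → List (Fin 4) → V → ℝ)
    (v : ℕ → V) (pix : ℕ → List (Fin 4)) (m : FullTree 4 dmax) (t : ℕ) : ℝ :=
  ∏ i ∈ Finset.range t, qt i (FullTree.leafOf [] m (pix i)) (v i)

/-- `Qd dmax qt v pix G t j` is the recursively mixed coding probability
`q(v_t | v^{t-1}, s)` at the block `s = (pix t).take (dmax - j)` on the path `S_t` of blocks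
containing pixel `t` (`j` is the distance from `s` down to the singleton block of `S_t`),
computed with the current weights `G = g_{·|t-1}`:
`q = q̃` at singleton blocks and `q = (1 - g_{s|t-1}) q̃ + g_{s|t-1} q(child)` otherwise. -/
noncomputable def Qd (dmax : ℕ) {V : Type} (qt : ℕ → List (Fin 4) → V → ℝ)
    (v : ℕ → V) (pix : ℕ → List (Fin 4)) (G : List (Fin 4) → ℝ) (t : ℕ) : ℕ → ℝ
  | 0 => qt t ((pix t).take dmax) (v t)
  | j + 1 =>
    (1 - G ((pix t).take (dmax - (j + 1)))) * qt t ((pix t).take (dmax - (j + 1))) (v t)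
      + G ((pix t).take (dmax - (j + 1))) * Qd dmax qt v pix G t j

/-- One step of the weight update: `g_{s|t} = g_{s|t-1}` if `s ∉ S_t` or `|s| = 1`
(`s ∈ S_t` iff `s` is a prefix of the pixel path `pix t`; `|s| = 1` iff `s.length = dmax`),
and `g_{s|t} = g_{s|t-1} · q(v_t | v^{t-1}, s_child) / q(v_t | v^{t-1}, s)` otherwise. -/
noncomputable def Gnext (dmax : ℕ) {V : Type} (qt : ℕ → List (Fin 4) → V → ℝ)
    (v : ℕ → V) (pix : ℕ → List (Fin 4)) (G : List (Fin 4) → ℝ) (t : ℕ)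
    (s : List (Fin 4)) : ℝ :=
  if s <+: pix t ∧ s.length < dmax then
    G s * Qd dmax qt v pix G t (dmax - s.length - 1) / Qd dmax qt v pix G t (dmax - s.length)
  else G s

/-- `GT dmax qt v pix g t s = g_{s|t-1}`: the sequentially updated weights, with
`GT ... 0 s = g_{s|-1} = g s`. -/
noncomputable def GT (dmax : ℕ) {V : Type} (qt : ℕ → List (Fin 4) → V → ℝ)
    (v : ℕ → V) (pix : ℕ → List (Fin 4)) (g : List (Fin 4) → ℝ) : ℕ → List (Fin 4) → ℝ
  | 0 => g
  | t + 1 => Gnext dmax qt v pix (GT dmax qt v pix g t) t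

/-- `phi k h j u` is the recursively defined value `φ(u)` at the node with path `u` of the
complete `k`-ary tree, where `j` is the remaining depth below `u` (so `j = 0` at the deepest
level, where `φ(u) := 1`), and otherwise
`φ(u) := max (1 - h u) (h u * ∏_{i} φ(u ++ [i]))`. -/
noncomputable def phi (k : ℕ) (h : List (Fin k) → ℝ) : ℕ → List (Fin k) → ℝ
  | 0, _ => 1
  | j + 1, u => max (1 - h u) (h u * ∏ i : Fin k, phi k h j (u ++ [i]))

theorem Finset.sup'_univ_pi_prod {ι α R : Type*} [Fintype ι] [DecidableEq ι] [Fintype α]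
    [CommSemiring R] [LinearOrder R] [IsOrderedRing R] (f : ι → α → R) (hf : ∀ i a, 0 ≤ f i a)
    (hs : (Finset.univ : Finset (ι → α)).Nonempty) (ht : (Finset.univ : Finset α).Nonempty) :
    Finset.univ.sup' hs (fun c : ι → α => ∏ i, f i (c i)) = ∏ i, Finset.univ.sup' ht (f i) := by
  refine le_antisymm (Finset.sup'_le _ _ fun c _ => Finset.prod_le_prod (fun i _ => hf i (c i))
    fun i _ => Finset.le_sup' (f i) (Finset.mem_univ (c i))) ?_
  choose a _ ha using fun i => Finset.exists_mem_eq_sup' ht (f i)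
  calc ∏ i, Finset.univ.sup' ht (f i) = ∏ i, f i (a i) := Finset.prod_congr rfl fun i _ => ha i
    _ ≤ _ := Finset.le_sup' (fun c : ι → α => ∏ i, f i (c i)) (Finset.mem_univ a)

namespace FullTree

variable {k : ℕ}

theorem eq_of_append_singleton_prefix {u s : List (Fin k)} {i j : Fin k}
    (hi : u ++ [i] <+: s) (hj : u ++ [j] <+: s) : i = j := by
  have hij : u ++ [i] = u ++ [j] :=
    (List.prefix_of_prefix_length_le hi hj (by simp)).eq_of_length (by simp)
  simpa using hij

theorem prefix_of_mem_leaves :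
    ∀ {D : ℕ} {u s : List (Fin k)} {T : FullTree k D}, s ∈ leaves u T → u <+: s
  | _, u, s, .leaf, hs => by rw [List.mem_singleton.1 hs]
  | _, u, s, .node c, hs => by
    obtain ⟨i, -, hi⟩ := Finset.mem_biUnion.1 hs
    exact (u.prefix_append [i]).trans (prefix_of_mem_leaves hi)

theorem prefix_of_mem_inners :
    ∀ {D : ℕ} {u s : List (Fin k)} {T : FullTree k D}, s ∈ inners u T → u <+: s
  | _, u, s, .leaf, hs => absurd hs (Finset.notMem_empty s)
  | _, u, s, .node c, hs => by
    rcases Finset.mem_insert.1 hs with rfl | hs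
    · exact List.prefix_refl s
    · obtain ⟨i, -, hi⟩ := Finset.mem_biUnion.1 hs
      exact (u.prefix_append [i]).trans (prefix_of_mem_inners hi)

theorem pairwiseDisjoint_children {f : Fin k → Finset (List (Fin k))} {u : List (Fin k)}
    (hf : ∀ i, ∀ s ∈ f i, u ++ [i] <+: s) (t : Finset (Fin k)) :
    (t : Set (Fin k)).PairwiseDisjoint f := by
  intro i _ j _ hij
  exact Finset.disjoint_left.2 fun s hsi hsj =>
    hij (eq_of_append_singleton_prefix (hf i s hsi) (hf j s hsj))

theorem weight_leaf {D : ℕ} (h : List (Fin k) → ℝ) (u : List (Fin k)) :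
    weight h u (.leaf : FullTree k D) = 1 - h u := by
  simp [weight, leaves, inners]

theorem weight_node {D : ℕ} (h : List (Fin k) → ℝ) (u : List (Fin k))
    (c : Fin k → FullTree k D) :
    weight h u (.node c) = h u * ∏ i, weight h (u ++ [i]) (c i) := by
  have hu : u ∉ Finset.univ.biUnion fun i => inners (u ++ [i]) (c i) := fun hu => by
    obtain ⟨i, -, hi⟩ := Finset.mem_biUnion.1 hu
    simpa using (prefix_of_mem_inners hi).length_le
  rw [weight, leaves, inners, Finset.prod_insert hu,
    Finset.prod_biUnion (pairwiseDisjoint_children (fun _ _ => prefix_of_mem_leaves) _),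
    Finset.prod_biUnion (pairwiseDisjoint_children (fun _ _ => prefix_of_mem_inners) _)]
  simp only [weight, Finset.prod_mul_distrib]
  ring

theorem weight_congr {D : ℕ} {h h' : List (Fin k) → ℝ} {u : List (Fin k)}
    (T : FullTree k D) (he : ∀ s, u <+: s → h s = h' s) :
    weight h u T = weight h' u T := by
  unfold weight
  congr 1
  · exact Finset.prod_congr rfl fun s hs => by rw [he s (prefix_of_mem_leaves hs)]
  · exact Finset.prod_congr rfl fun s hs => by rw [he s (prefix_of_mem_inners hs)]

theorem sum_univ_zero {M : Type*} [AddCommMonoid M] (f : FullTree k 0 → M) :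
    ∑ T, f T = f .leaf :=
  Fintype.sum_eq_single _ fun T hT => (hT (by cases T; rfl)).elim

theorem sum_univ_succ {M : Type*} [AddCommMonoid M] {D : ℕ} (f : FullTree k (D + 1) → M) :
    ∑ T, f T = f .leaf + ∑ c : Fin k → FullTree k D, f (.node c) := by
  rw [← (equivSucc k D).symm.sum_comp, Fintype.sum_option]
  rfl

instance {D : ℕ} : Nonempty (FullTree k D) := ⟨.leaf⟩

theorem sup'_univ_zero {α : Type*} [SemilatticeSup α] (f : FullTree k 0 → α) :
    Finset.univ.sup' ⟨.leaf, Finset.mem_univ _⟩ f = f .leaf :=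
  le_antisymm (Finset.sup'_le _ _ fun T _ => by cases T; rfl)
    (Finset.le_sup' f (Finset.mem_univ _))

theorem sup'_univ_succ {α : Type*} [SemilatticeSup α] {D : ℕ} (f : FullTree k (D + 1) → α) :
    Finset.univ.sup' ⟨.leaf, Finset.mem_univ _⟩ f
      = f .leaf ⊔ Finset.univ.sup' Finset.univ_nonempty fun c => f (.node c) := by
  refine le_antisymm (Finset.sup'_le _ _ fun T _ => ?_)
    (sup_le (Finset.le_sup' f (Finset.mem_univ _))
      (Finset.sup'_le _ _ fun c _ => Finset.le_sup' f (Finset.mem_univ _)))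
  cases T with
  | leaf => exact le_sup_left
  | node c => exact (Finset.le_sup' (fun c => f (.node c)) (Finset.mem_univ c)).trans le_sup_right

section Weight

variable {h : List (Fin k) → ℝ} {N : ℕ}

theorem weight_nonneg (hh : ∀ s : List (Fin k), s.length ≤ N → h s ∈ Set.Icc 0 1) :
    ∀ {D : ℕ} {u : List (Fin k)} (T : FullTree k D), u.length + D = N → 0 ≤ weight h u T
  | _, u, .leaf, hu => by
    rw [weight_leaf]
    linarith [(hh u (by omega)).2]
  | _, u, .node c, hu => by
    rw [weight_node]
    exact mul_nonneg (hh u (by omega)).1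
      (Finset.prod_nonneg fun i _ => weight_nonneg hh (c i) (by simp; omega))

theorem sum_weight_eq_one (hN : ∀ s : List (Fin k), s.length = N → h s = 0) :
    ∀ (D : ℕ) (u : List (Fin k)), u.length + D = N → ∑ T : FullTree k D, weight h u T = 1
  | 0, u, hu => by rw [sum_univ_zero, weight_leaf, hN u (by omega), sub_zero]
  | D + 1, u, hu => by
    have hchild : ∀ i, ∑ T : FullTree k D, weight h (u ++ [i]) T = 1 :=
      fun i => sum_weight_eq_one hN D _ (by simp; omega)
    simp only [sum_univ_succ, weight_leaf, weight_node, ← Finset.mul_sum, ← Fintype.prod_sum,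
      hchild, Finset.prod_const_one]
    ring

theorem sup'_weight_eq_phi (hh : ∀ s : List (Fin k), s.length ≤ N → h s ∈ Set.Icc 0 1)
    (hN : ∀ s : List (Fin k), s.length = N → h s = 0) :
    ∀ (D : ℕ) (u : List (Fin k)), u.length + D = N →
      Finset.univ.sup' ⟨.leaf, Finset.mem_univ _⟩ (fun T : FullTree k D => weight h u T)
        = phi k h D u
  | 0, u, hu => by rw [sup'_univ_zero, weight_leaf, hN u (by omega), sub_zero, phi]
  | D + 1, u, hu => by
    have hchild : ∀ i, Finset.univ.sup' ⟨.leaf, Finset.mem_univ _⟩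
        (fun T : FullTree k D => weight h (u ++ [i]) T) = phi k h D (u ++ [i]) :=
      fun i => sup'_weight_eq_phi hh hN D _ (by simp; omega)
    have hnonneg : ∀ i (T : FullTree k D), 0 ≤ weight h (u ++ [i]) T :=
      fun i T => weight_nonneg hh T (by simp; omega)
    simp only [sup'_univ_succ, weight_leaf, weight_node]
    rw [← Finset.mul₀_sup' (hh u (by omega)).1, Finset.sup'_univ_pi_prod _ hnonneg _
      ⟨.leaf, Finset.mem_univ _⟩]
    simp only [hchild, phi]

end Weight

theorem leafOf_leaf {D : ℕ} (u p : List (Fin k)) : leafOf u (.leaf : FullTree k D) p = u := by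
  cases p <;> rfl

theorem leafOf_node {D : ℕ} (u : List (Fin k)) (c : Fin k → FullTree k D) (i : Fin k)
    (p : List (Fin k)) : leafOf u (.node c) (i :: p) = leafOf (u ++ [i]) (c i) p := rfl

end FullTree

open FullTree

section Quadtree

variable {dmax : ℕ} {V : Type} {qt : ℕ → List (Fin 4) → V → ℝ} {v : ℕ → V}
  {pix : ℕ → List (Fin 4)} {G : List (Fin 4) → ℝ} {t : ℕ}

theorem Qd_pos (hqt : ∀ t s x, 0 < qt t s x)
    (hG : ∀ s : List (Fin 4), s.length ≤ dmax → G s ∈ Set.Icc 0 1) :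
    ∀ j, 0 < Qd dmax qt v pix G t j
  | 0 => hqt _ _ _
  | j + 1 => by
    obtain ⟨h0, h1⟩ := hG ((pix t).take (dmax - (j + 1))) (by simp)
    have hq := hqt t ((pix t).take (dmax - (j + 1))) (v t)
    have hQ := Qd_pos hqt hG j
    rw [Qd]
    rcases h1.lt_or_eq with h1 | h1
    · nlinarith [mul_pos (sub_pos.2 h1) hq]
    · rw [h1, sub_self, zero_mul, zero_add, one_mul]
      exact hQ

theorem Qd_succ_of_prefix {s : List (Fin 4)} {D : ℕ} (hs : s <+: pix t)
    (hD : s.length + (D + 1) = dmax) :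
    Qd dmax qt v pix G t (D + 1) = (1 - G s) * qt t s (v t) + G s * Qd dmax qt v pix G t D := by
  rw [Qd, show dmax - (D + 1) = s.length by omega, ← List.prefix_iff_eq_take.1 hs]

theorem Gnext_of_prefix {s : List (Fin 4)} {D : ℕ} (hs : s <+: pix t)
    (hD : s.length + (D + 1) = dmax) :
    Gnext dmax qt v pix G t s = G s * Qd dmax qt v pix G t D / Qd dmax qt v pix G t (D + 1) := by
  rw [Gnext, if_pos ⟨hs, by omega⟩, show dmax - s.length - 1 = D by omega,
    show dmax - s.length = D + 1 by omega]

theorem Gnext_of_not_prefix {s : List (Fin 4)} (hs : ¬ s <+: pix t) :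
    Gnext dmax qt v pix G t s = G s :=
  if_neg fun h => hs h.1

theorem Gnext_of_length_le {s : List (Fin 4)} (hs : dmax ≤ s.length) :
    Gnext dmax qt v pix G t s = G s :=
  if_neg fun h => by omega

theorem Gnext_mem (hqt : ∀ t s x, 0 < qt t s x)
    (hG : ∀ s : List (Fin 4), s.length ≤ dmax → G s ∈ Set.Icc 0 1) (s : List (Fin 4))
    (hs : s.length ≤ dmax) : Gnext dmax qt v pix G t s ∈ Set.Icc 0 1 := by
  by_cases hpre : s <+: pix t
  swap
  · rw [Gnext_of_not_prefix hpre]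
    exact hG s hs
  obtain hlen | hlen := lt_or_ge s.length dmax
  swap
  · rw [Gnext_of_length_le hlen]
    exact hG s hs
  obtain ⟨D, hD⟩ : ∃ D, s.length + (D + 1) = dmax := ⟨dmax - s.length - 1, by omega⟩
  have hQ := Qd_pos (t := t) (v := v) (pix := pix) hqt hG (D + 1)
  have hQ' := Qd_pos (t := t) (v := v) (pix := pix) hqt hG D
  obtain ⟨h0, h1⟩ := hG s hs
  rw [Gnext_of_prefix hpre hD]
  refine ⟨by positivity, (div_le_one hQ).2 ?_⟩
  rw [Qd_succ_of_prefix hpre hD]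
  nlinarith [hqt t s (v t)]

theorem weight_Gnext_of_not_prefix {D : ℕ} {u : List (Fin 4)} (m : FullTree 4 D)
    (hu : ¬ u <+: pix t) : weight (Gnext dmax qt v pix G t) u m = weight G u m :=
  weight_congr m fun _ hs => Gnext_of_not_prefix fun hs' => hu (hs.trans hs')

theorem weight_Gnext_mul_Qd (hqt : ∀ t s x, 0 < qt t s x)
    (hG : ∀ s : List (Fin 4), s.length ≤ dmax → G s ∈ Set.Icc 0 1)
    (hpix : (pix t).length = dmax) :
    ∀ {D : ℕ} (u p : List (Fin 4)) (m : FullTree 4 D), u ++ p = pix t → p.length = D →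
      weight (Gnext dmax qt v pix G t) u m * Qd dmax qt v pix G t D
        = weight G u m * qt t (leafOf u m p) (v t)
  | 0, u, p, .leaf, hp, hD => by
    rw [List.length_eq_zero_iff.1 hD, List.append_nil] at hp
    rw [weight_leaf, weight_leaf, Gnext_of_length_le (by rw [hp, hpix]), leafOf_leaf, Qd, hp,
      ← hpix, List.take_length]
  | D + 1, u, p, .leaf, hp, hD => by
    have hu : u <+: pix t := ⟨p, hp⟩
    have hlen : u.length + (D + 1) = dmax := by rw [← hpix, ← hp, List.length_append, hD]
    have hQ := (Qd_pos (t := t) (v := v) (pix := pix) hqt hG (D + 1)).ne'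
    rw [weight_leaf, weight_leaf, Gnext_of_prefix hu hlen, leafOf_leaf]
    field_simp
    rw [Qd_succ_of_prefix hu hlen]
    ring
  | D + 1, u, [], .node c, hp, hD => absurd hD (by simp)
  | D + 1, u, i :: p, .node c, hp, hD => by
    have hu : u <+: pix t := ⟨i :: p, hp⟩
    have hlen : u.length + (D + 1) = dmax := by rw [← hpix, ← hp, List.length_append, hD]
    have hi : u ++ [i] <+: pix t := ⟨p, by simpa using hp⟩
    have hchild := weight_Gnext_mul_Qd hqt hG hpix (u ++ [i]) p (c i) (by simpa using hp)
      (by simpa using hD)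
    have hrest : ∀ j ∈ Finset.univ.erase i,
        weight (Gnext dmax qt v pix G t) (u ++ [j]) (c j) = weight G (u ++ [j]) (c j) :=
      fun j hj => weight_Gnext_of_not_prefix _ fun hj' =>
        Finset.ne_of_mem_erase hj (eq_of_append_singleton_prefix hj' hi)
    have hQ := (Qd_pos (t := t) (v := v) (pix := pix) hqt hG (D + 1)).ne'
    rw [weight_node, weight_node, ← Finset.mul_prod_erase _ _ (Finset.mem_univ i),
      ← Finset.mul_prod_erase _ _ (Finset.mem_univ i), Finset.prod_congr rfl hrest,
      Gnext_of_prefix hu hlen, leafOf_node]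
    field_simp
    linear_combination (G u * ∏ j ∈ Finset.univ.erase i, weight G (u ++ [j]) (c j)) * hchild

variable {g : List (Fin 4) → ℝ}

theorem GT_mem (hqt : ∀ t s x, 0 < qt t s x)
    (hg : ∀ s : List (Fin 4), s.length ≤ dmax → g s ∈ Set.Icc 0 1) :
    ∀ (τ : ℕ) (s : List (Fin 4)), s.length ≤ dmax → GT dmax qt v pix g τ s ∈ Set.Icc 0 1
  | 0 => hg
  | τ + 1 => Gnext_mem hqt (GT_mem hqt hg τ)

theorem GT_eq_zero (hg : ∀ s : List (Fin 4), s.length = dmax → g s = 0) :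
    ∀ (τ : ℕ) (s : List (Fin 4)), s.length = dmax → GT dmax qt v pix g τ s = 0
  | 0 => hg
  | τ + 1 => fun s hs => (Gnext_of_length_le hs.ge).trans (GT_eq_zero hg τ s hs)

theorem like_succ (m : FullTree 4 dmax) (τ : ℕ) :
    like dmax qt v pix m (τ + 1)
      = like dmax qt v pix m τ * qt τ (leafOf [] m (pix τ)) (v τ) :=
  Finset.prod_range_succ _ _

theorem weight_mul_like (hqt : ∀ t s x, 0 < qt t s x)
    (hg : ∀ s : List (Fin 4), s.length ≤ dmax → g s ∈ Set.Icc 0 1)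
    (hpix : ∀ i, (pix i).length = dmax) (m : FullTree 4 dmax) :
    ∀ τ, weight g [] m * like dmax qt v pix m τ
      = weight (GT dmax qt v pix g τ) [] m
        * ∏ i ∈ Finset.range τ, Qd dmax qt v pix (GT dmax qt v pix g i) i dmax
  | 0 => by simp [like, GT]
  | τ + 1 => by
    have hstep := weight_Gnext_mul_Qd (v := v) (G := GT dmax qt v pix g τ) hqt (GT_mem hqt hg τ)
      (hpix τ) [] (pix τ) m rfl (hpix τ)
    rw [like_succ, ← mul_assoc, weight_mul_like hqt hg hpix m τ, Finset.prod_range_succ, GT]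
    linear_combination (∏ i ∈ Finset.range τ, Qd dmax qt v pix (GT dmax qt v pix g i) i dmax)
      * hstep.symm

theorem posterior_eq_weight_GT (hqt : ∀ t s x, 0 < qt t s x)
    (hg : ∀ s : List (Fin 4), s.length ≤ dmax → g s ∈ Set.Icc 0 1)
    (hg1 : ∀ s : List (Fin 4), s.length = dmax → g s = 0)
    (hpix : ∀ i, (pix i).length = dmax) (τ : ℕ) (m : FullTree 4 dmax) :
    weight g [] m * like dmax qt v pix m τ
        / ∑ m' : FullTree 4 dmax, weight g [] m' * like dmax qt v pix m' τ
      = weight (GT dmax qt v pix g τ) [] m := by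
  have hZ : 0 < ∏ i ∈ Finset.range τ, Qd dmax qt v pix (GT dmax qt v pix g i) i dmax :=
    Finset.prod_pos fun i _ => Qd_pos hqt (GT_mem hqt hg i) dmax
  simp only [weight_mul_like hqt hg hpix, ← Finset.sum_mul,
    sum_weight_eq_one (GT_eq_zero hg1 τ) dmax [] (zero_add dmax), one_mul]
  exact mul_div_cancel_right₀ _ hZ.ne'

end Quadtree

theorem stmt12_general
    -- general k-ary part
    (k D : ℕ) (h : List (Fin k) → ℝ)
    (hh : ∀ u : List (Fin k), u.length ≤ D → h u ∈ Set.Icc (0 : ℝ) 1)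
    (hhD : ∀ u : List (Fin k), u.length = D → h u = 0)
    -- quadtree mixture algorithm part
    (dmax : ℕ) (V : Type)
    (g : List (Fin 4) → ℝ)
    (hg : ∀ s : List (Fin 4), s.length ≤ dmax → g s ∈ Set.Icc (0 : ℝ) 1)
    (hg1 : ∀ s : List (Fin 4), s.length = dmax → g s = 0)
    (qt : ℕ → List (Fin 4) → V → ℝ)
    (hqt : ∀ t s x, 0 < qt t s x)
    (v : ℕ → V) (pix : ℕ → List (Fin 4))
    (hpix : ∀ i, (pix i).length = dmax)
    (t : ℕ) :
    (Finset.univ.sup' ⟨FullTree.leaf, Finset.mem_univ _⟩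
        (fun T : FullTree k D => FullTree.weight h [] T)
      = phi k h D [])
    ∧ (Finset.univ.sup' ⟨FullTree.leaf, Finset.mem_univ _⟩
        (fun m : FullTree 4 dmax =>
          FullTree.weight g [] m * like dmax qt v pix m (t + 1)
            / ∑ m' : FullTree 4 dmax,
                FullTree.weight g [] m' * like dmax qt v pix m' (t + 1))
      = phi 4 (GT dmax qt v pix g (t + 1)) dmax []) := by
  refine ⟨sup'_weight_eq_phi hh hhD D [] (zero_add D), ?_⟩
  simp only [posterior_eq_weight_GT hqt hg hg1 hpix]
  exact sup'_weight_eq_phi (GT_mem hqt hg _) (GT_eq_zero hg1 _) dmax [] (zero_add dmax)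

/-- (i) For the complete `k`-ary tree of depth `D` with parameters
`h_u ∈ [0,1]` vanishing at depth `D`, the maximum over all full subtrees `T` of the weight
`∏_{u ∈ L^T} (1 - h u) ∏_{u' ∈ I^T} h u'` equals `φ(λ) = phi k h D []`.
(ii) In particular, for the quadtree mixture algorithm (`k = 4`), with `h` taken to be the
sequentially updated weights `g_{·|t} = GT dmax qt v pix g (t+1)`, the maximum a posteriori
model probability `max_m p(m | v^t)` (the posterior being
`p(m | v^t) = p(m) p(v^t | m) / ∑_{m'} p(m') p(v^{t} | m')`) equals `φ_t(s_λ)`. -/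
theorem stmt12
    -- general k-ary part
    (k D : ℕ) (hk : 1 ≤ k) (h : List (Fin k) → ℝ)
    (hh : ∀ u : List (Fin k), u.length ≤ D → h u ∈ Set.Icc (0 : ℝ) 1)
    (hhD : ∀ u : List (Fin k), u.length = D → h u = 0)
    -- quadtree mixture algorithm part
    (dmax : ℕ) (V : Type) [Fintype V]
    (g : List (Fin 4) → ℝ)
    (hg : ∀ s : List (Fin 4), s.length ≤ dmax → g s ∈ Set.Icc (0 : ℝ) 1)
    (hg1 : ∀ s : List (Fin 4), s.length = dmax → g s = 0)
    (qt : ℕ → List (Fin 4) → V → ℝ)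
    (hqt : ∀ t s x, 0 < qt t s x)
    (hqts : ∀ t s, ∑ x : V, qt t s x = 1)
    (v : ℕ → V) (pix : ℕ → List (Fin 4))
    (hpix : ∀ i, (pix i).length = dmax)
    (hinj : ∀ i j, i < 4 ^ dmax → j < 4 ^ dmax → pix i = pix j → i = j)
    (t : ℕ) (ht : t < 4 ^ dmax) :
    (Finset.univ.sup' ⟨FullTree.leaf, Finset.mem_univ _⟩
        (fun T : FullTree k D => FullTree.weight h [] T)
      = phi k h D [])
    ∧ (Finset.univ.sup' ⟨FullTree.leaf, Finset.mem_univ _⟩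
        (fun m : FullTree 4 dmax =>
          FullTree.weight g [] m * like dmax qt v pix m (t + 1)
            / ∑ m' : FullTree 4 dmax,
                FullTree.weight g [] m' * like dmax qt v pix m' (t + 1))
      = phi 4 (GT dmax qt v pix g (t + 1)) dmax []) :=
  stmt12_general k D h hh hhD dmax V g hg hg1 qt hqt v pix hpix t
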